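/- Let A, B, C, D be topes on a finite type E such that (A,B) ≼ (C,D). Then (−D, B) is an upper bound of both (A,B) and (−D,C): that is, (A,B) ≼ (−D,B) and (−D,C) ≼ (−D,B). -/

import Mathlib

/-- The separation set `S(X,Y)` of two sign vectors. -/
def SepSet {E : Type*} (X Y : E → SignType) : Set E := {e | X e = -(Y e) ∧ X e ≠ 0}

/-- A tope on `E`: a sign vector with full support. -/
abbrev Tope (E : Type*) : Type _ := { X : E → SignType // ∀ e, X e ≠ 0 }

instance {E : Type*} : Neg (Tope E) :=
  ⟨fun X => ⟨-X.1, fun e h => X.2 e (by revert h; cases hx : X.1 e <;> simp [hx])⟩⟩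

/-- The order relation of the tope-pair poset `Q`:
`(T,R) ≼ (T′,R′)` iff `S(T′,T) ⊆ S(T′,R)` and `S(T′,R) ⊆ S(T′,R′)`. -/
def QLE {E : Type*} (p q : Tope E × Tope E) : Prop :=
  SepSet q.1.1 p.1.1 ⊆ SepSet q.1.1 p.2.1 ∧ SepSet q.1.1 p.2.1 ⊆ SepSet q.1.1 q.2.1

/-!
For topes, `S(X,Y)` is the set where `X` and `Y` disagree, so `S(-X,Y) = S(X,Y)ᶜ`. Since a tope
takes only two values, `S(Y,Z)` is the symmetric difference of `S(X,Y)` and `S(X,Z)`; under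
`(A,B) ≼ (C,D)` this gives `S(D,B) = S(C,D) \ S(C,B)` and `S(D,A) = S(C,D) \ S(C,A)`, and both
inclusions become inclusions of complements of these differences.
-/

namespace SignType

lemma ne_iff_eq_neg {a b : SignType} (ha : a ≠ 0) (hb : b ≠ 0) : a ≠ b ↔ a = -b := by
  cases a <;> cases b <;> simp_all

lemma eq_of_ne_of_ne {a b c : SignType} (ha : a ≠ 0) (hb : b ≠ 0) (hc : c ≠ 0)
    (hab : a ≠ b) (hac : a ≠ c) : b = c := by
  cases a <;> cases b <;> cases c <;> simp_all

end SignType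

section SepSet

variable {E : Type*}

lemma sepSet_comm (X Y : E → SignType) : SepSet X Y = SepSet Y X := by
  ext e
  simp only [SepSet, Set.mem_ofPred_eq]
  constructor <;> rintro ⟨hneg, hne⟩ <;> refine ⟨by simp [hneg], fun h => hne (by simp [hneg, h])⟩

lemma sepSet_self (X : E → SignType) : SepSet X X = ∅ := by
  ext e
  simp only [SepSet, Set.mem_ofPred_eq, Set.mem_empty_iff_false, iff_false, not_and]
  intro h
  cases hx : X e <;> simp_all

end SepSet

namespace Tope

variable {E : Type*}

lemma mem_sepSet {X Y : Tope E} {e : E} : e ∈ SepSet X.1 Y.1 ↔ X.1 e ≠ Y.1 e := by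
  rw [SignType.ne_iff_eq_neg (X.2 e) (Y.2 e)]
  exact and_iff_left (X.2 e)

lemma sepSet_neg_left (X Y : Tope E) : SepSet (-X).1 Y.1 = (SepSet X.1 Y.1)ᶜ := by
  ext e
  rw [Set.mem_compl_iff, mem_sepSet, mem_sepSet, not_not]
  change -X.1 e ≠ Y.1 e ↔ _
  rw [SignType.ne_iff_eq_neg (by simpa using X.2 e) (Y.2 e), neg_inj]

lemma sepSet_eq_diff_of_subset {X Y Z : Tope E} (h : SepSet X.1 Y.1 ⊆ SepSet X.1 Z.1) :
    SepSet Z.1 Y.1 = SepSet X.1 Z.1 \ SepSet X.1 Y.1 := by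
  ext e
  have hXY := @h e
  simp only [Set.mem_sdiff, mem_sepSet, not_not] at hXY ⊢
  constructor
  · intro hZY
    have hXY' : X.1 e = Y.1 e := by
      by_contra hne
      exact hZY (SignType.eq_of_ne_of_ne (X.2 e) (Z.2 e) (Y.2 e) (hXY hne) hne)
    exact ⟨fun hXZ => hZY (hXZ ▸ hXY'), hXY'⟩
  · rintro ⟨hXZ, hXY'⟩ hZY
    exact hXZ (hXY'.trans hZY.symm)

end Tope

theorem join_upper_bound_general {E : Type*} (A B C D : Tope E)
    (h : QLE (A, B) (C, D)) :
    QLE (A, B) (-D, B) ∧ QLE (-D, C) (-D, B) := by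
  obtain ⟨hAB, hBD⟩ := h
  have hDB : SepSet D.1 B.1 = SepSet C.1 D.1 \ SepSet C.1 B.1 :=
    Tope.sepSet_eq_diff_of_subset hBD
  have hDA : SepSet D.1 A.1 = SepSet C.1 D.1 \ SepSet C.1 A.1 :=
    Tope.sepSet_eq_diff_of_subset (hAB.trans hBD)
  refine ⟨⟨?_, subset_rfl⟩, ?_, ?_⟩
  · change SepSet (-D).1 A.1 ⊆ SepSet (-D).1 B.1
    rw [Tope.sepSet_neg_left, Tope.sepSet_neg_left, Set.compl_subset_compl, hDB, hDA]
    exact Set.sdiff_subset_sdiff_right hAB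
  · change SepSet (-D).1 (-D).1 ⊆ _
    rw [sepSet_self]
    exact Set.empty_subset _
  · change SepSet (-D).1 C.1 ⊆ SepSet (-D).1 B.1
    rw [Tope.sepSet_neg_left, Tope.sepSet_neg_left, Set.compl_subset_compl, hDB, sepSet_comm]
    exact Set.sdiff_subset

/-- If `(A,B) ≼ (C,D)` then `(-D,B)` is an upper bound of `(A,B)` and
`(-D,C)` in the tope-pair poset. -/
theorem join_upper_bound {E : Type*} [Fintype E] (A B C D : Tope E)
    (h : QLE (A, B) (C, D)) :
    QLE (A, B) (-D, B) ∧ QLE (-D, C) (-D, B) :=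
  join_upper_bound_general A B C D h
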